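/- arXiv:2504.17172 — 2 statements merged into one kernel-verified Lean document; each statement's English description precedes it below -/
import Mathlib

section
/- The map e ↦ Θ(e) is lower semi-continuous on 𝓔 with respect to the topology of hypo-convergence: if e_n → e in τ_h, then Θ(e) ≤ liminf_n Θ(e_n). -/
open Filter Set Topology MeasureTheory
open scoped ENNReal

noncomputable section

/-- The space-time (light-cone) partial order on `ℝ²`: `q ∈ ∨_p`. -/
def cle (p q : ℝ × ℝ) : Prop := |q.1 - p.1| ≤ q.2 - p.2

/-- `e(r⁺, q) := sup {e(r', q) : r' ∈ ∨_r \ {r}}` for `r ≠ q`, and `0` otherwise. -/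
def ePlus (e : ℝ × ℝ → ℝ × ℝ → ℝ) (r q : ℝ × ℝ) : ℝ :=
  if r = q then 0 else sSup ((fun r' => e r' q) '' {r' | cle r r' ∧ r' ≠ r})

/-- Membership in `𝓔`: non-negative upper semi-continuous functions on `ℝ⁴_≤`
(extended by `0` off `ℝ⁴_≤`) satisfying the generalized reverse triangle inequality. -/
structure IsE (e : ℝ × ℝ → ℝ × ℝ → ℝ) : Prop where
  nonneg : ∀ p q, 0 ≤ e p q
  usc : UpperSemicontinuous (fun u : (ℝ × ℝ) × (ℝ × ℝ) => e u.1 u.2)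
  zero_of_not_cle : ∀ p q, ¬ cle p q → e p q = 0
  triangle : ∀ p r q, cle p r → cle r q → e p r + ePlus e r q ≤ e p q

/-- Two point pairs `u, v ∈ ℝ⁴_≤` are disjoint if no `r` satisfies
`u.1 ≤ r ≤ u.2` and `v.1 ≤ r ≤ v.2` simultaneously. -/
def ptsDisjoint (u v : (ℝ × ℝ) × (ℝ × ℝ)) : Prop :=
  ¬ ∃ r : ℝ × ℝ, cle u.1 r ∧ cle r u.2 ∧ cle v.1 r ∧ cle r v.2

/-- `Θ(e, u) := J((y-x)/(t-s), e(u)/(t-s)) · (t-s)` for `u = (x,s;y,t)`. -/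
def ThetaPt (J : ℝ → ℝ → ℝ≥0∞) (e : ℝ × ℝ → ℝ × ℝ → ℝ) (u : (ℝ × ℝ) × (ℝ × ℝ)) : ℝ≥0∞ :=
  J ((u.2.1 - u.1.1) / (u.2.2 - u.1.2)) (e u.1 u.2 / (u.2.2 - u.1.2)) *
    ENNReal.ofReal (u.2.2 - u.1.2)

/-- The preliminary rate function `Θ(e)`: the supremum over countable collections of
pairwise disjoint non-degenerate points of the sums of `Θ(e, u_i)`. -/
def Theta (J : ℝ → ℝ → ℝ≥0∞) (e : ℝ × ℝ → ℝ × ℝ → ℝ) : ℝ≥0∞ :=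
  ⨆ (U : Set ((ℝ × ℝ) × (ℝ × ℝ))) (_ : U.Countable)
    (_ : ∀ u ∈ U, cle u.1 u.2 ∧ u.1.2 ≠ u.2.2)
    (_ : U.Pairwise ptsDisjoint), ∑' u : U, ThetaPt J e u.val

/-- Property A2 for the point-to-point rate function `J` (with `Fγ γ = F(γ,1)` the shape
function): joint convexity, continuity, vanishing below the shape function, and strict
monotonicity above it. -/
structure PropA2 (J : ℝ → ℝ → ℝ≥0∞) (Fγ : ℝ → ℝ) : Prop where
  cont : Continuous fun v : ℝ × ℝ => J v.1 v.2
  convex : ∀ a b γ₁ γ₂ x₁ x₂ : ℝ, 0 ≤ a → 0 ≤ b → a + b = 1 →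
    J (a * γ₁ + b * γ₂) (a * x₁ + b * x₂) ≤
      ENNReal.ofReal a * J γ₁ x₁ + ENNReal.ofReal b * J γ₂ x₂
  zero_of_le : ∀ γ x : ℝ, x ≤ Fγ γ → J γ x = 0
  strictMono : ∀ γ : ℝ, StrictMonoOn (J γ) (Ici (Fγ γ))

/-- Hypograph of a real-valued function. -/
def hypo {X : Type*} (f : X → ℝ) : Set (X × ℝ) := {z | z.2 ≤ f z.1}

/-- Painlevé–Kuratowski lower limit of a sequence of sets. -/
def Li {Y : Type*} [TopologicalSpace Y] (A : ℕ → Set Y) : Set Y :=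
  {a | ∃ u : ℕ → Y, Tendsto u atTop (nhds a) ∧ ∀ᶠ n in atTop, u n ∈ A n}

/-- Painlevé–Kuratowski upper limit of a sequence of sets. -/
def Ls {Y : Type*} [TopologicalSpace Y] (A : ℕ → Set Y) : Set Y :=
  {a | ∃ φ : ℕ → ℕ, StrictMono φ ∧ ∃ u : ℕ → Y, (∀ k, u k ∈ A (φ k)) ∧
    Tendsto u atTop (nhds a)}

/-- Hypo-convergence: Painlevé–Kuratowski convergence of hypographs. -/
def HypoConv {X : Type*} [TopologicalSpace X] (fn : ℕ → X → ℝ) (f : X → ℝ) : Prop :=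
  Li (fun n => hypo (fn n)) = hypo f ∧ Ls (fun n => hypo (fn n)) = hypo f


/-! ### Auxiliary lemmas -/

lemma cle_iff {p q : ℝ × ℝ} :
    cle p q ↔ q.1 - q.2 ≤ p.1 - p.2 ∧ p.1 + p.2 ≤ q.1 + q.2 := by
  unfold cle
  rw [abs_le]
  constructor <;> rintro ⟨h1, h2⟩ <;> constructor <;> linarith

lemma cle_refl' (p : ℝ × ℝ) : cle p p := by simp [cle]

lemma cle_trans' {p q r : ℝ × ℝ} (h1 : cle p q) (h2 : cle q r) : cle p r := by
  rw [cle_iff] at h1 h2 ⊢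
  exact ⟨by linarith [h1.1, h2.1], by linarith [h1.2, h2.2]⟩

lemma usc_comp' {X Y : Type*} [TopologicalSpace X] [TopologicalSpace Y]
    {f : Y → ℝ} (hf : UpperSemicontinuous f) {g : X → Y} (hg : Continuous g) :
    UpperSemicontinuous (fun x => f (g x)) :=
  fun x y hy => (hg.tendsto x).eventually (hf (g x) y hy)

lemma usc_bddAbove_image {X : Type*} [TopologicalSpace X] {f : X → ℝ}
    (hf : UpperSemicontinuous f) {K : Set X} (hK : IsCompact K) :
    BddAbove (f '' K) := by
  rcases K.eq_empty_or_nonempty with h | ⟨z0, hz0⟩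
  · simp [h]
  obtain ⟨t, htK, ht⟩ := hK.elim_nhds_subcover (fun x => {x' | f x' < f x + 1})
    (fun x _ => hf x (f x + 1) (by linarith))
  have htne : (t.image fun x => f x + 1).Nonempty := by
    have := ht hz0
    simp only [Set.mem_iUnion] at this
    obtain ⟨x, hx, -⟩ := this
    exact ⟨f x + 1, Finset.mem_image_of_mem _ hx⟩
  refine ⟨(t.image fun x => f x + 1).max' htne, ?_⟩
  rintro _ ⟨z, hz, rfl⟩
  have := ht hz
  simp only [Set.mem_iUnion] at this
  obtain ⟨x, hx, hzx⟩ := this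
  exact hzx.le.trans (Finset.le_max' _ (f x + 1) (Finset.mem_image_of_mem (fun x => f x + 1) hx))

lemma ePlus_nonneg {e : ℝ × ℝ → ℝ × ℝ → ℝ} (he : ∀ p q, 0 ≤ e p q) (r q : ℝ × ℝ) :
    0 ≤ ePlus e r q := by
  unfold ePlus
  split
  · exact le_refl 0
  · exact Real.sSup_nonneg (by rintro x ⟨r', _, rfl⟩; exact he r' q)

lemma bddAbove_ePlus_set {f : ℝ × ℝ → ℝ × ℝ → ℝ} (hf : IsE f) (p q : ℝ × ℝ) :
    BddAbove ((fun r' => f r' q) '' {r' | cle p r' ∧ r' ≠ p}) := by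
  have husc : UpperSemicontinuous (fun r' : ℝ × ℝ => f r' q) :=
    usc_comp' hf.usc (continuous_id.prodMk continuous_const)
  set D : Set (ℝ × ℝ) := {r' | cle p r' ∧ cle r' q} with hD
  have hDc : IsCompact D := by
    have hclosed : IsClosed D := by
      have h1 : IsClosed {r' : ℝ × ℝ | cle p r'} := by
        have : {r' : ℝ × ℝ | cle p r'} = {r' : ℝ × ℝ | |r'.1 - p.1| - (r'.2 - p.2) ≤ 0} := by
          ext r'
          simp only [Set.mem_setOf_eq, cle, sub_nonpos]
        rw [this]
        exact isClosed_le (by fun_prop) continuous_const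
      have h2 : IsClosed {r' : ℝ × ℝ | cle r' q} := by
        have : {r' : ℝ × ℝ | cle r' q} = {r' : ℝ × ℝ | |q.1 - r'.1| - (q.2 - r'.2) ≤ 0} := by
          ext r'
          simp only [Set.mem_setOf_eq, cle, sub_nonpos]
        rw [this]
        exact isClosed_le (by fun_prop) continuous_const
      exact h1.inter h2
    refine ((isCompact_Icc.prod isCompact_Icc :
      IsCompact (Icc (p.1 - (q.2 - p.2)) (p.1 + (q.2 - p.2)) ×ˢ Icc p.2 q.2))).of_isClosed_subset
      hclosed ?_
    rintro r' ⟨h1, h2⟩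
    have h1' := abs_le.1 h1
    have h2' := abs_le.1 h2
    exact ⟨Set.mem_Icc.2 ⟨by linarith, by linarith⟩, Set.mem_Icc.2 ⟨by linarith, by linarith⟩⟩
  obtain ⟨M, hM⟩ := usc_bddAbove_image husc hDc
  refine ⟨max M 0, ?_⟩
  rintro x ⟨r', ⟨hr1, hr2⟩, rfl⟩
  show f r' q ≤ max M 0
  by_cases hrq : cle r' q
  · exact le_max_of_le_left (hM ⟨r', ⟨hr1, hrq⟩, rfl⟩)
  · rw [hf.zero_of_not_cle _ _ hrq]
    exact le_max_right _ _

/-- Monotonicity of `e ∈ 𝓔` under enlargement of the interval. -/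
lemma IsE.mono {f : ℝ × ℝ → ℝ × ℝ → ℝ} (hf : IsE f) {p p' q' q : ℝ × ℝ}
    (hpp : cle p p') (hqq : cle q' q) : f p' q' ≤ f p q := by
  by_cases hc : cle p' q'
  swap
  · rw [hf.zero_of_not_cle _ _ hc]; exact hf.nonneg p q
  have hp'q : cle p' q := cle_trans' hc hqq
  have hpq : cle p q := cle_trans' hpp hp'q
  have step1 : f p' q' ≤ f p' q := by
    have h1 := hf.triangle p' q' q hc hqq
    have h2 := ePlus_nonneg hf.nonneg q' q
    linarith
  refine step1.trans ?_
  by_cases hpp' : p' = p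
  · rw [hpp']
  have hpq' : p ≠ q := by
    rintro rfl
    apply hpp'
    have h1 := hpp; have h2 := hp'q
    rw [cle_iff] at h1 h2
    have e1 : p'.1 = p.1 := by linarith [h1.1, h1.2, h2.1, h2.2]
    have e2 : p'.2 = p.2 := by linarith [h1.1, h1.2, h2.1, h2.2]
    exact Prod.ext e1 e2
  have htri := hf.triangle p p q (cle_refl' p) hpq
  have h0 : ePlus f p q ≤ f p q := by
    have := hf.nonneg p p
    linarith
  refine le_trans ?_ h0
  rw [ePlus, if_neg hpq']
  exact le_csSup (bddAbove_ePlus_set hf p q) ⟨p', ⟨hpp, hpp'⟩, rfl⟩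

lemma PropA2.mono {J : ℝ → ℝ → ℝ≥0∞} {Fγ : ℝ → ℝ} (hJ : PropA2 J Fγ) (γ : ℝ) :
    Monotone (J γ) := by
  intro x x' hxx
  rcases le_or_gt x' (Fγ γ) with h | h
  · rw [hJ.zero_of_le γ x (hxx.trans h), hJ.zero_of_le γ x' h]
  rcases le_or_gt x (Fγ γ) with h2 | h2
  · rw [hJ.zero_of_le γ x h2]; exact zero_le'
  exact (hJ.strictMono γ).monotoneOn (mem_Ici.2 h2.le) (mem_Ici.2 (h2.trans_le hxx).le) hxx

/-- Widening of a point pair: shift the times outward by `ε`. -/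
def wid (ε : ℝ) (u : (ℝ × ℝ) × (ℝ × ℝ)) : (ℝ × ℝ) × (ℝ × ℝ) :=
  ((u.1.1, u.1.2 - ε), (u.2.1, u.2.2 + ε))

lemma wid_inj (ε : ℝ) : Function.Injective (wid ε) := by
  rintro ⟨⟨a, b⟩, ⟨c, d⟩⟩ ⟨⟨a', b'⟩, ⟨c', d'⟩⟩ h
  simp only [wid, Prod.mk.injEq] at h
  obtain ⟨⟨h1, h2⟩, h3, h4⟩ := h
  simp only [Prod.mk.injEq]
  refine ⟨⟨h1, by linarith⟩, h3, by linarith⟩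

lemma diamond_inter_iff {u v : (ℝ × ℝ) × (ℝ × ℝ)} :
    (∃ r : ℝ × ℝ, cle u.1 r ∧ cle r u.2 ∧ cle v.1 r ∧ cle r v.2) ↔
      max (u.2.1 - u.2.2) (v.2.1 - v.2.2) ≤ min (u.1.1 - u.1.2) (v.1.1 - v.1.2) ∧
      max (u.1.1 + u.1.2) (v.1.1 + v.1.2) ≤ min (u.2.1 + u.2.2) (v.2.1 + v.2.2) := by
  constructor
  · rintro ⟨r, h1, h2, h3, h4⟩
    rw [cle_iff] at h1 h2 h3 h4
    refine ⟨max_le (le_min ?_ ?_) (le_min ?_ ?_), max_le (le_min ?_ ?_) (le_min ?_ ?_)⟩ <;>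
      linarith [h1.1, h1.2, h2.1, h2.2, h3.1, h3.2, h4.1, h4.2]
  · rintro ⟨hA, hB⟩
    set a := max (u.2.1 - u.2.2) (v.2.1 - v.2.2) with ha
    set b := max (u.1.1 + u.1.2) (v.1.1 + v.1.2) with hb
    refine ⟨((a + b) / 2, (b - a) / 2), ?_, ?_, ?_, ?_⟩ <;> rw [cle_iff] <;> constructor <;>
      simp only [] <;>
      [ (have := hA.trans (min_le_left _ _)); (have := le_max_left (u.1.1 + u.1.2) (v.1.1 + v.1.2));
        (have := le_max_left (u.2.1 - u.2.2) (v.2.1 - v.2.2)); (have := hB.trans (min_le_left _ _));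
        (have := hA.trans (min_le_right _ _)); (have := le_max_right (u.1.1 + u.1.2) (v.1.1 + v.1.2));
        (have := le_max_right (u.2.1 - u.2.2) (v.2.1 - v.2.2)); (have := hB.trans (min_le_right _ _))] <;>
      · rw [ha, hb] at *
        linarith [le_max_left (u.2.1 - u.2.2) (v.2.1 - v.2.2)]

lemma wid_disjoint {u v : (ℝ × ℝ) × (ℝ × ℝ)} (h : ptsDisjoint u v) :
    ∀ᶠ ε in 𝓝[>] (0 : ℝ), ptsDisjoint (wid ε u) (wid ε v) := by
  unfold ptsDisjoint at h
  rw [diamond_inter_iff, not_and_or, not_le, not_le] at h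
  have key : ∀ ε : ℝ, 0 < ε →
      max ((wid ε u).2.1 - (wid ε u).2.2) ((wid ε v).2.1 - (wid ε v).2.2)
        = max (u.2.1 - u.2.2) (v.2.1 - v.2.2) - ε ∧
      min ((wid ε u).1.1 - (wid ε u).1.2) ((wid ε v).1.1 - (wid ε v).1.2)
        = min (u.1.1 - u.1.2) (v.1.1 - v.1.2) + ε ∧
      max ((wid ε u).1.1 + (wid ε u).1.2) ((wid ε v).1.1 + (wid ε v).1.2)
        = max (u.1.1 + u.1.2) (v.1.1 + v.1.2) - ε ∧
      min ((wid ε u).2.1 + (wid ε u).2.2) ((wid ε v).2.1 + (wid ε v).2.2)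
        = min (u.2.1 + u.2.2) (v.2.1 + v.2.2) + ε := by
    intro ε _
    simp only [wid]
    refine ⟨?_, ?_, ?_, ?_⟩
    · rw [show u.2.1 - (u.2.2 + ε) = u.2.1 - u.2.2 - ε by ring,
        show v.2.1 - (v.2.2 + ε) = v.2.1 - v.2.2 - ε by ring, max_sub_sub_right]
    · rw [show u.1.1 - (u.1.2 - ε) = u.1.1 - u.1.2 + ε by ring,
        show v.1.1 - (v.1.2 - ε) = v.1.1 - v.1.2 + ε by ring, min_add_add_right]
    · rw [show u.1.1 + (u.1.2 - ε) = u.1.1 + u.1.2 - ε by ring,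
        show v.1.1 + (v.1.2 - ε) = v.1.1 + v.1.2 - ε by ring, max_sub_sub_right]
    · rw [show u.2.1 + (u.2.2 + ε) = u.2.1 + u.2.2 + ε by ring,
        show v.2.1 + (v.2.2 + ε) = v.2.1 + v.2.2 + ε by ring, min_add_add_right]
  rcases h with h | h
  · have hg : (0:ℝ) < (max (u.2.1 - u.2.2) (v.2.1 - v.2.2)
        - min (u.1.1 - u.1.2) (v.1.1 - v.1.2)) / 2 := by linarith
    filter_upwards [Ioo_mem_nhdsGT_of_mem ⟨le_refl (0:ℝ), hg⟩] with ε hε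
    unfold ptsDisjoint
    rw [diamond_inter_iff, not_and_or, not_le, not_le]
    left
    rw [(key ε hε.1).1, (key ε hε.1).2.1]
    rcases hε with ⟨hε1, hε2⟩
    linarith
  · have hg : (0:ℝ) < (max (u.1.1 + u.1.2) (v.1.1 + v.1.2)
        - min (u.2.1 + u.2.2) (v.2.1 + v.2.2)) / 2 := by linarith
    filter_upwards [Ioo_mem_nhdsGT_of_mem ⟨le_refl (0:ℝ), hg⟩] with ε hε
    unfold ptsDisjoint
    rw [diamond_inter_iff, not_and_or, not_le, not_le]
    right
    rw [(key ε hε.1).2.2.1, (key ε hε.1).2.2.2]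
    rcases hε with ⟨hε1, hε2⟩
    linarith


/-- The map `e ↦ Θ(e)` is lower semi-continuous on `𝓔` with respect to hypo-convergence:
if `e_n → e` in `τ_h` then `Θ(e) ≤ liminf_n Θ(e_n)`. -/
theorem stmt10 (J : ℝ → ℝ → ℝ≥0∞) (Fγ : ℝ → ℝ) (hJ : PropA2 J Fγ)
    (en : ℕ → ℝ × ℝ → ℝ × ℝ → ℝ) (e : ℝ × ℝ → ℝ × ℝ → ℝ)
    (hen : ∀ n, IsE (en n)) (he : IsE e)
    (hconv : HypoConv (fun n => fun u : (ℝ × ℝ) × (ℝ × ℝ) => en n u.1 u.2)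
      (fun u : (ℝ × ℝ) × (ℝ × ℝ) => e u.1 u.2)) :
    Theta J e ≤ Filter.liminf (fun n => Theta J (en n)) atTop := by
  classical
  -- Step 0: the key per-point lower bound coming from hypo-convergence.
  have key_lower : ∀ (u : (ℝ × ℝ) × (ℝ × ℝ)) (ε : ℝ), 0 < ε →
      ∀ᶠ n in atTop, e u.1 u.2 - ε ≤ en n (wid ε u).1 (wid ε u).2 := by
    intro u ε hε
    have hmem : ((u, e u.1 u.2) : (((ℝ × ℝ) × (ℝ × ℝ)) × ℝ)) ∈
        hypo (fun u : (ℝ × ℝ) × (ℝ × ℝ) => e u.1 u.2) := by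
      show e u.1 u.2 ≤ e u.1 u.2
      exact le_refl _
    rw [← hconv.1] at hmem
    obtain ⟨w, hwt, hwn⟩ := hmem
    have h11 : Tendsto (fun n => (w n).1.1.1) atTop (𝓝 u.1.1) :=
      (continuous_fst.fst.fst.tendsto (u, e u.1 u.2)).comp hwt
    have h12 : Tendsto (fun n => (w n).1.1.2) atTop (𝓝 u.1.2) :=
      (continuous_fst.fst.snd.tendsto (u, e u.1 u.2)).comp hwt
    have h21 : Tendsto (fun n => (w n).1.2.1) atTop (𝓝 u.2.1) :=
      (continuous_fst.snd.fst.tendsto (u, e u.1 u.2)).comp hwt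
    have h22 : Tendsto (fun n => (w n).1.2.2) atTop (𝓝 u.2.2) :=
      (continuous_fst.snd.snd.tendsto (u, e u.1 u.2)).comp hwt
    have hr : Tendsto (fun n => (w n).2) atTop (𝓝 (e u.1 u.2)) :=
      (continuous_snd.tendsto (u, e u.1 u.2)).comp hwt
    have hε3 : (0:ℝ) < ε / 3 := by linarith
    filter_upwards [hwn, h11.eventually (eventually_abs_sub_lt _ hε3),
      h12.eventually (eventually_abs_sub_lt _ hε3),
      h21.eventually (eventually_abs_sub_lt _ hε3),
      h22.eventually (eventually_abs_sub_lt _ hε3),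
      hr.eventually (eventually_abs_sub_lt _ hε3)] with n hn e11 e12 e21 e22 er
    have hstep : en n (w n).1.1 (w n).1.2 ≤ en n (wid ε u).1 (wid ε u).2 := by
      refine (hen n).mono ?_ ?_
      · show cle (u.1.1, u.1.2 - ε) (w n).1.1
        unfold cle
        simp only []
        have := abs_lt.1 e12
        exact le_of_lt (calc |(w n).1.1.1 - u.1.1| < ε / 3 := e11
          _ ≤ (w n).1.1.2 - (u.1.2 - ε) := by linarith)
      · show cle (w n).1.2 (u.2.1, u.2.2 + ε)
        unfold cle
        simp only []
        have := abs_lt.1 e22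
        have habs : |u.2.1 - (w n).1.2.1| < ε / 3 := by
          rw [abs_sub_comm]; exact e21
        exact le_of_lt (calc |u.2.1 - (w n).1.2.1| < ε / 3 := habs
          _ ≤ u.2.2 + ε - (w n).1.2.2 := by linarith)
    have hrle : (w n).2 ≤ en n (w n).1.1 (w n).1.2 := hn
    have := abs_lt.1 er
    linarith
  -- Step 1: reduce to finite collections.
  have main : ∀ V : Finset ((ℝ × ℝ) × (ℝ × ℝ)),
      (∀ u ∈ V, cle u.1 u.2 ∧ u.1.2 ≠ u.2.2) → ((V : Set _).Pairwise ptsDisjoint) →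
      ∑ u ∈ V, ThetaPt J e u ≤ liminf (fun n => Theta J (en n)) atTop := by
    intro V hadm hpair
    have hl : ∀ u ∈ V, 0 < u.2.2 - u.1.2 := by
      intro u hu
      have h1 := (hadm u hu).1
      have h2 := (hadm u hu).2
      unfold cle at h1
      have h3 : (0:ℝ) ≤ u.2.2 - u.1.2 := le_trans (abs_nonneg _) h1
      rcases h3.lt_or_eq with h | h
      · exact h
      · exact absurd (by linarith : u.1.2 = u.2.2) h2
    set G : ℝ → ℝ≥0∞ := fun ε => ∑ u ∈ V,
      J ((u.2.1 - u.1.1) / (u.2.2 - u.1.2 + 2 * ε)) ((e u.1 u.2 - ε) / (u.2.2 - u.1.2 + 2 * ε)) *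
        ENNReal.ofReal (u.2.2 - u.1.2 + 2 * ε) with hG
    have hev : ∀ᶠ ε in 𝓝[>] (0:ℝ), G ε ≤ liminf (fun n => Theta J (en n)) atTop := by
      have hd : ∀ᶠ ε in 𝓝[>] (0:ℝ), ∀ u ∈ V, ∀ v ∈ V, u ≠ v →
          ptsDisjoint (wid ε u) (wid ε v) := by
        rw [eventually_all_finset]
        intro u hu
        rw [eventually_all_finset]
        intro v hv
        rcases eq_or_ne u v with rfl | huv
        · exact Eventually.of_forall fun ε h => absurd rfl h
        · filter_upwards [wid_disjoint (hpair hu hv huv)] with ε h _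
          exact h
      filter_upwards [hd, self_mem_nhdsWithin] with ε hdε hεpos
      rw [Set.mem_Ioi] at hεpos
      refine le_liminf_of_le (by isBoundedDefault) ?_
      have hkey : ∀ᶠ n in atTop, ∀ u ∈ V,
          e u.1 u.2 - ε ≤ en n (wid ε u).1 (wid ε u).2 := by
        rw [eventually_all_finset]
        intro u _
        exact key_lower u ε hεpos
      filter_upwards [hkey] with n hn
      have hVadm : ∀ v ∈ (↑(V.image (wid ε)) : Set ((ℝ × ℝ) × (ℝ × ℝ))),
          cle v.1 v.2 ∧ v.1.2 ≠ v.2.2 := by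
        intro v hv
        rw [Finset.coe_image, Set.mem_image] at hv
        obtain ⟨u, hu, rfl⟩ := hv
        rw [Finset.mem_coe] at hu
        constructor
        · have h1 := (hadm u hu).1
          unfold cle at h1 ⊢
          show |u.2.1 - u.1.1| ≤ u.2.2 + ε - (u.1.2 - ε)
          linarith
        · show u.1.2 - ε ≠ u.2.2 + ε
          have := hl u hu
          intro hcon
          linarith [hcon]
      have hVpair : (↑(V.image (wid ε)) : Set ((ℝ × ℝ) × (ℝ × ℝ))).Pairwise ptsDisjoint := by
        intro a ha b hb hab
        rw [Finset.coe_image, Set.mem_image] at ha hb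
        obtain ⟨x, hx, rfl⟩ := ha
        obtain ⟨y, hy, rfl⟩ := hb
        rw [Finset.mem_coe] at hx hy
        exact hdε x hx y hy (fun hxy => hab (by rw [hxy]))
      calc G ε ≤ ∑ u ∈ V, ThetaPt J (en n) (wid ε u) := by
            refine Finset.sum_le_sum fun u hu => ?_
            unfold ThetaPt wid
            simp only []
            rw [show u.2.2 + ε - (u.1.2 - ε) = u.2.2 - u.1.2 + 2 * ε by ring]
            refine mul_le_mul_left (hJ.mono _ ?_) _
            have hpos : (0:ℝ) < u.2.2 - u.1.2 + 2 * ε := by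
              have := hl u hu; linarith
            exact (div_le_div_iff_of_pos_right hpos).2 (hn u hu)
        _ = ∑' (v : (↑(V.image (wid ε)) : Set ((ℝ × ℝ) × (ℝ × ℝ)))),
              ThetaPt J (en n) v.val := by
            rw [Finset.tsum_subtype' (V.image (wid ε)) (ThetaPt J (en n))]
            rw [Finset.sum_image (fun x _ y _ h => wid_inj ε h)]
        _ ≤ Theta J (en n) := by
            rw [Theta]
            refine le_iSup_of_le (↑(V.image (wid ε))) ?_
            refine le_iSup_of_le (V.image (wid ε)).countable_toSet ?_
            refine le_iSup_of_le hVadm ?_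
            exact le_iSup_of_le hVpair le_rfl
    have hGlim : Tendsto G (𝓝[>] (0:ℝ)) (𝓝 (∑ u ∈ V, ThetaPt J e u)) := by
      rw [hG]
      refine tendsto_finset_sum _ fun u hu => ?_
      have hl' := hl u hu
      have hden : Tendsto (fun ε : ℝ => u.2.2 - u.1.2 + 2 * ε) (𝓝 0)
          (𝓝 (u.2.2 - u.1.2)) := by
        have hc : Continuous (fun ε : ℝ => u.2.2 - u.1.2 + 2 * ε) := by fun_prop
        have h := hc.tendsto (0:ℝ)
        simpa using h
      have hnum : Tendsto (fun ε : ℝ => e u.1 u.2 - ε) (𝓝 0) (𝓝 (e u.1 u.2)) := by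
        have hc : Continuous (fun ε : ℝ => e u.1 u.2 - ε) := by fun_prop
        have h := hc.tendsto (0:ℝ)
        simpa using h
      have hγ : Tendsto (fun ε : ℝ => (u.2.1 - u.1.1) / (u.2.2 - u.1.2 + 2 * ε)) (𝓝 0)
          (𝓝 ((u.2.1 - u.1.1) / (u.2.2 - u.1.2))) := tendsto_const_nhds.div hden hl'.ne'
      have hx : Tendsto (fun ε : ℝ => (e u.1 u.2 - ε) / (u.2.2 - u.1.2 + 2 * ε)) (𝓝 0)
          (𝓝 (e u.1 u.2 / (u.2.2 - u.1.2))) := hnum.div hden hl'.ne'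
      have hJt : Tendsto (fun ε : ℝ =>
          J ((u.2.1 - u.1.1) / (u.2.2 - u.1.2 + 2 * ε)) ((e u.1 u.2 - ε) / (u.2.2 - u.1.2 + 2 * ε)))
          (𝓝[>] (0:ℝ))
          (𝓝 (J ((u.2.1 - u.1.1) / (u.2.2 - u.1.2)) (e u.1 u.2 / (u.2.2 - u.1.2)))) := by
        have := (hJ.cont.tendsto ((u.2.1 - u.1.1) / (u.2.2 - u.1.2),
          e u.1 u.2 / (u.2.2 - u.1.2))).comp ((hγ.prodMk_nhds hx).mono_left (nhdsWithin_le_nhds : 𝓝[>] (0:ℝ) ≤ 𝓝 0))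
        exact this
      have hof : Tendsto (fun ε : ℝ => ENNReal.ofReal (u.2.2 - u.1.2 + 2 * ε)) (𝓝[>] (0:ℝ))
          (𝓝 (ENNReal.ofReal (u.2.2 - u.1.2))) :=
        (ENNReal.continuous_ofReal.tendsto _).comp (hden.mono_left (nhdsWithin_le_nhds : 𝓝[>] (0:ℝ) ≤ 𝓝 0))
      have hThetaPt : ThetaPt J e u =
          J ((u.2.1 - u.1.1) / (u.2.2 - u.1.2)) (e u.1 u.2 / (u.2.2 - u.1.2)) *
            ENNReal.ofReal (u.2.2 - u.1.2) := rfl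
      rw [hThetaPt]
      exact ENNReal.Tendsto.mul hJt (Or.inr ENNReal.ofReal_ne_top) hof
        (Or.inl ((ENNReal.ofReal_pos.2 hl').ne'))
    exact le_of_tendsto hGlim hev
  -- Step 2: conclude.
  rw [Theta]
  refine iSup_le fun U => iSup_le fun hUc => iSup_le fun hUadm => iSup_le fun hUp => ?_
  rw [ENNReal.tsum_eq_iSup_sum]
  refine iSup_le fun F => ?_
  have hinj : ∀ x ∈ F, ∀ y ∈ F, (x : ↥U).val = (y : ↥U).val → x = y :=
    fun x _ y _ h => Subtype.ext h
  rw [← Finset.sum_image hinj]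
  refine main (F.image Subtype.val) ?_ ?_
  · intro u hu
    rw [Finset.mem_image] at hu
    obtain ⟨x, _, rfl⟩ := hu
    exact hUadm x.val x.2
  · refine hUp.mono ?_
    intro u hu
    rw [Finset.mem_coe, Finset.mem_image] at hu
    obtain ⟨x, _, rfl⟩ := hu
    exact x.2


end
end

section
/- Let (e_n) be a sequence in 𝓔 satisfying the approximate metric composition law e_n(p,q) = max_{p≤(z,r)≤q} [e_n(x,s;z,r) + e_n((z,r)⁺;y,t)] + ε_n with ε_n → 0, and suppose e ∈ 𝓔 does not satisfy the exact metric composition law. Then e_n does not hypo-converge to e; equivalently, there exists ε > 0 such that d(e_n, e) > ε for all large n in any metric inducing the hypograph topology. -/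
/-!
Hypo-convergence gives two things: every value `e(p,q)` is a limit of values `eₙ(pₙ,qₙ)` at
nearby points (the `Li` half), and `e` dominates the limsup of `eₙ` along converging points
(the `Ls` half). Split `eₙ(pₙ,qₙ)` by the approximate composition law at time `r` and let the
splitting points `cₙ` converge to `c = (z, r)` along a subsequence. The far endpoint `xₙ` of the
split may collapse onto `c`, which would lose the `⁺` in `e(c⁺,q)`; so `(xₙ,qₙ)` is split again
at a later time `τ`, and the first piece is absorbed into `eₙ(pₙ,·)` by the reverse triangle
inequality. In the limit `e(p,q) ≤ e(p,N_τ) + e(c⁺,q)` with `N_τ → c` as `τ ↓ r`, and upper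
semicontinuity of `e` gives `e(p,q) ≤ e(p,c) + e(c⁺,q) ≤ sup_z (e(p,(z,r)) + e((z,r)⁺,q))`.
-/

open Filter Set Topology MeasureTheory
open scoped ENNReal

noncomputable section

/-- The generalized metric composition law. -/
def MCL (e : ℝ × ℝ → ℝ × ℝ → ℝ) : Prop :=
  ∀ p q : ℝ × ℝ, ∀ r : ℝ, cle p q → p.2 ≤ r → r < q.2 →
    e p q = sSup {v : ℝ | ∃ z : ℝ, cle p (z, r) ∧ cle (z, r) q ∧ (z, r) ≠ q ∧
      v = e p (z, r) + ePlus e (z, r) q}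

open Metric Bornology

def mclValues (e : ℝ × ℝ → ℝ × ℝ → ℝ) (p q : ℝ × ℝ) (r : ℝ) : Set ℝ :=
  {v : ℝ | ∃ z : ℝ, cle p (z, r) ∧ cle (z, r) q ∧ (z, r) ≠ q ∧ v = e p (z, r) + ePlus e (z, r) q}

def ApproxMCL (e : ℝ × ℝ → ℝ × ℝ → ℝ) (ε : ℝ) : Prop :=
  ∀ p q : ℝ × ℝ, ∀ r : ℝ, cle p q → p.2 ≤ r → r < q.2 → e p q ≤ sSup (mclValues e p q r) + ε

namespace cle

theorem refl (a : ℝ × ℝ) : cle a a := by simp [cle]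

theorem snd_le {a b : ℝ × ℝ} (h : cle a b) : a.2 ≤ b.2 :=
  sub_nonneg.1 <| (abs_nonneg _).trans h

theorem trans {a b c : ℝ × ℝ} (hab : cle a b) (hbc : cle b c) : cle a c := by
  unfold cle at *
  calc |c.1 - a.1| ≤ |c.1 - b.1| + |b.1 - a.1| := abs_sub_le _ _ _
    _ ≤ c.2 - a.2 := by linarith

theorem dist_le {a b : ℝ × ℝ} (h : cle a b) : dist b a ≤ b.2 - a.2 := by
  rw [Prod.dist_eq, Real.dist_eq, Real.dist_eq, abs_of_nonneg (sub_nonneg.2 h.snd_le)]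
  exact max_le h le_rfl

theorem dist_le_dist {a x b : ℝ × ℝ} (hax : cle a x) (hxb : cle x b) : dist x a ≤ dist b a :=
  calc dist x a ≤ x.2 - a.2 := hax.dist_le
    _ ≤ |b.2 - a.2| := (sub_le_sub_right hxb.snd_le _).trans (le_abs_self _)
    _ ≤ dist b a := le_max_right _ _

end cle

theorem isClosed_setOf_cle : IsClosed {u : (ℝ × ℝ) × (ℝ × ℝ) | cle u.1 u.2} :=
  isClosed_le (by fun_prop) (by fun_prop)

theorem cle_of_tendsto {ι : Type*} {l : Filter ι} [l.NeBot] {a b : ι → ℝ × ℝ} {a₀ b₀ : ℝ × ℝ}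
    (ha : Tendsto a l (𝓝 a₀)) (hb : Tendsto b l (𝓝 b₀)) (h : ∀ᶠ i in l, cle (a i) (b i)) :
    cle a₀ b₀ :=
  isClosed_setOf_cle.mem_of_tendsto (ha.prodMk_nhds hb) h

theorem exists_cle_cle {a b : ℝ × ℝ} (h : cle a b) {t : ℝ} (ha : a.2 ≤ t) (hb : t ≤ b.2) :
    ∃ z : ℝ, cle a (z, t) ∧ cle (z, t) b := by
  unfold cle at *
  obtain ⟨h₁, h₂⟩ := abs_le.1 h
  refine ⟨max (a.1 - (t - a.2)) (b.1 - (b.2 - t)), abs_le.2 ⟨?_, ?_⟩, abs_le.2 ⟨?_, ?_⟩⟩ <;>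
    rcases max_cases (a.1 - (t - a.2)) (b.1 - (b.2 - t)) with ⟨hm, hm'⟩ | ⟨hm, hm'⟩ <;>
    simp only [hm] <;> linarith

theorem isCompact_setOf_cle_cle (a b : ℝ × ℝ) : IsCompact {x | cle a x ∧ cle x b} :=
  isCompact_of_isClosed_isBounded
    ((isClosed_setOf_cle.preimage (by fun_prop : Continuous fun x => (a, x))).inter
      (isClosed_setOf_cle.preimage (by fun_prop : Continuous fun x => (x, b))))
    (isBounded_closedBall.subset fun _ hx => mem_closedBall.2 (cle.dist_le_dist hx.1 hx.2))

theorem isBounded_setOf_cle_cle {ι : Type*} {a b : ι → ℝ × ℝ} (ha : IsBounded (range a))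
    (hb : IsBounded (range b)) : IsBounded {x | ∃ i, cle (a i) x ∧ cle x (b i)} := by
  obtain ⟨R, hR⟩ := (ha.union hb).subset_closedBall 0
  refine (isBounded_closedBall (x := (0 : ℝ × ℝ)) (r := 3 * R)).subset ?_
  rintro x ⟨i, hax, hxb⟩
  have hai := mem_closedBall.1 (hR (Or.inl ⟨i, rfl⟩))
  have hbi := mem_closedBall.1 (hR (Or.inr ⟨i, rfl⟩))
  rw [mem_closedBall]
  calc dist x 0 ≤ dist x (a i) + dist (a i) 0 := dist_triangle _ _ _
    _ ≤ dist (b i) 0 + dist (a i) 0 + dist (a i) 0 := by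
        gcongr
        exact (cle.dist_le_dist hax hxb).trans (dist_triangle_right _ _ _)
    _ ≤ 3 * R := by linarith

theorem le_of_upperSemicontinuousAt_of_cle {g : ℝ × ℝ → ℝ} {c : ℝ × ℝ}
    (hg : UpperSemicontinuousAt g c) {K T : ℝ} (hT : c.2 < T)
    (h : ∀ τ ∈ Ioo c.2 T, ∃ N, cle c N ∧ N.2 ≤ τ ∧ K ≤ g N) : K ≤ g c := by
  by_contra! hlt
  obtain ⟨ρ, hρ, hball⟩ := Metric.eventually_nhds_iff.1 (hg K hlt)
  have hmin : 0 < min (ρ / 2) ((T - c.2) / 2) := lt_min (by linarith) (by linarith)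
  obtain ⟨N, hcN, hNτ, hKN⟩ := h (c.2 + min (ρ / 2) ((T - c.2) / 2))
    ⟨by linarith, by linarith [min_le_right (ρ / 2) ((T - c.2) / 2)]⟩
  have := hball (hcN.dist_le.trans_lt (by linarith [min_le_left (ρ / 2) ((T - c.2) / 2)]))
  linarith

namespace IsE

variable {f : ℝ × ℝ → ℝ × ℝ → ℝ}

theorem upperSemicontinuous_left (hf : IsE f) (q : ℝ × ℝ) : UpperSemicontinuous (f · q) :=
  hf.usc.comp (f := fun u : (ℝ × ℝ) × (ℝ × ℝ) => f u.1 u.2)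
    (by fun_prop : Continuous fun x => (x, q))

theorem upperSemicontinuous_right (hf : IsE f) (p : ℝ × ℝ) : UpperSemicontinuous (f p ·) :=
  hf.usc.comp (f := fun u : (ℝ × ℝ) × (ℝ × ℝ) => f u.1 u.2)
    (by fun_prop : Continuous fun x => (p, x))

theorem cle_of_pos (hf : IsE f) {a b : ℝ × ℝ} (h : 0 < f a b) : cle a b := by
  by_contra hab
  exact h.ne' (hf.zero_of_not_cle a b hab)

theorem ePlus_nonneg (hf : IsE f) (c q : ℝ × ℝ) : 0 ≤ ePlus f c q := by
  unfold ePlus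
  split_ifs
  · exact le_rfl
  · exact Real.sSup_nonneg fun _ ⟨_, _, hv⟩ => hv ▸ hf.nonneg _ _

theorem bddAbove_ePlus_image (hf : IsE f) (c q : ℝ × ℝ) :
    BddAbove ((f · q) '' {x | cle c x ∧ x ≠ c}) := by
  refine (((hf.upperSemicontinuous_left q).upperSemicontinuousOn _).bddAbove_of_isCompact
    (isCompact_setOf_cle_cle c q)).union (bddAbove_singleton (a := 0)) |>.mono ?_
  rintro _ ⟨x, ⟨hcx, -⟩, rfl⟩
  by_cases hxq : cle x q
  · exact Or.inl ⟨x, ⟨hcx, hxq⟩, rfl⟩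
  · exact Or.inr (hf.zero_of_not_cle x q hxq)

theorem le_ePlus (hf : IsE f) {c x q : ℝ × ℝ} (hcx : cle c x) (hxc : x ≠ c) (hcq : c ≠ q) :
    f x q ≤ ePlus f c q := by
  rw [ePlus, if_neg hcq]
  exact le_csSup (hf.bddAbove_ePlus_image c q) ⟨x, ⟨hcx, hxc⟩, rfl⟩

theorem add_le_of_cle (hf : IsE f) {a c x d : ℝ × ℝ} (hac : cle a c) (hcd : cle c d)
    (hcd' : c ≠ d) (hcx : cle c x) (hxc : x ≠ c) : f a c + f x d ≤ f a d := by
  linarith [hf.triangle a c d hac hcd, hf.le_ePlus hcx hxc hcd']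

theorem bddAbove_mclValues (hf : IsE f) (p q : ℝ × ℝ) (r : ℝ) : BddAbove (mclValues f p q r) :=
  ⟨f p q, by rintro _ ⟨z, h₁, h₂, -, rfl⟩; exact hf.triangle _ _ _ h₁ h₂⟩

theorem sSup_mclValues_le (hf : IsE f) (p q : ℝ × ℝ) (r : ℝ) : sSup (mclValues f p q r) ≤ f p q :=
  Real.sSup_le (by rintro _ ⟨z, h₁, h₂, -, rfl⟩; exact hf.triangle _ _ _ h₁ h₂) (hf.nonneg p q)

theorem sSup_mclValues_nonneg (hf : IsE f) (p q : ℝ × ℝ) (r : ℝ) :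
    0 ≤ sSup (mclValues f p q r) :=
  Real.sSup_nonneg fun _ ⟨_, _, _, _, hv⟩ => hv ▸ add_nonneg (hf.nonneg _ _) (hf.ePlus_nonneg _ _)

variable {ε : ℝ}

theorem exists_split (hf : IsE f) (happ : ApproxMCL f ε) {a b : ℝ × ℝ} {t δ : ℝ} (hab : cle a b)
    (ha : a.2 ≤ t) (hb : t < b.2) (hδ : 0 < δ) :
    ∃ z : ℝ, ∃ x : ℝ × ℝ, cle a (z, t) ∧ cle (z, t) x ∧ x ≠ (z, t) ∧ cle x b ∧
      f a b ≤ f a (z, t) + f x b + ε + δ := by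
  have hne : ∀ z : ℝ, (z, t) ≠ b := fun z h => hb.ne (congrArg Prod.snd h)
  obtain ⟨z₀, h₁, h₂⟩ := exists_cle_cle hab ha hb.le
  have hS : (mclValues f a b t).Nonempty := ⟨_, z₀, h₁, h₂, hne z₀, rfl⟩
  obtain ⟨_, ⟨z, haz, hzb, -, rfl⟩, hz⟩ := exists_lt_of_lt_csSup hS (sub_lt_self _ (half_pos hδ))
  rw [ePlus, if_neg (hne z)] at hz
  have hT : ((f · b) '' {x | cle (z, t) x ∧ x ≠ (z, t)}).Nonempty :=
    ⟨f b b, b, ⟨hzb, (hne z).symm⟩, rfl⟩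
  obtain ⟨_, ⟨x, ⟨hzx, hxz⟩, rfl⟩, hx⟩ := exists_lt_of_lt_csSup hT (sub_lt_self _ (half_pos hδ))
  beta_reduce at hx
  have := happ a b t hab ha hb
  by_cases hxb : cle x b
  · exact ⟨z, x, haz, hzx, hxz, hxb, by linarith⟩
  · rw [hf.zero_of_not_cle x b hxb] at hx
    exact ⟨z, b, haz, hzb, (hne z).symm, cle.refl b, by linarith [hf.nonneg b b]⟩

theorem _root_.ApproxMCL.nonneg (hf : IsE f) (happ : ApproxMCL f ε) : 0 ≤ ε := by
  have := happ (0, 0) (0, 1) 0 (by norm_num [cle]) le_rfl (by norm_num)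
  linarith [hf.sSup_mclValues_le (0, 0) (0, 1) 0]

theorem exists_split_across (hf : IsE f) (happ : ApproxMCL f ε) {a c x b : ℝ × ℝ} {τ δ : ℝ}
    (hac : cle a c) (hcx : cle c x) (hxc : x ≠ c) (hxb : cle x b) (hcτ : c.2 < τ)
    (hτb : τ < b.2) (hδ : 0 < δ) :
    ∃ N X : ℝ × ℝ, cle c N ∧ N.2 ≤ τ ∧ cle N X ∧ τ ≤ X.2 ∧ cle X b ∧
      f a c + f x b ≤ f a N + f X b + ε + δ := by
  by_cases hxτ : x.2 ≤ τ
  · obtain ⟨u, X, hxu, huX, -, hXb, hsplit⟩ := hf.exists_split happ hxb hxτ hτb hδ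
    have hcu : c ≠ (u, τ) := fun h => hcτ.ne (congrArg Prod.snd h)
    have := hf.add_le_of_cle hac (hcx.trans hxu) hcu hcx hxc
    exact ⟨(u, τ), X, hcx.trans hxu, le_rfl, huX, huX.snd_le, hXb, by linarith⟩
  · have := happ.nonneg hf
    exact ⟨c, x, cle.refl c, hcτ.le, hcx, (not_le.1 hxτ).le, hxb, by linarith⟩

end IsE

section Hypo

variable {Y : Type*} [TopologicalSpace Y] {fn : ℕ → Y → ℝ} {f : Y → ℝ}

theorem eventually_lt_of_Ls_subset_hypo (hLs : Ls (fun n => hypo (fn n)) ⊆ hypo f)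
    {m : ℕ → ℕ} (hm : StrictMono m) {u : ℕ → Y} {y : Y} (hu : Tendsto u atTop (𝓝 y)) {a : ℝ}
    (ha : f y < a) : ∀ᶠ k in atTop, fn (m k) (u k) < a := by
  by_contra h
  obtain ⟨φ, hφ, hle⟩ := extraction_of_frequently_atTop
    ((not_eventually.1 h).mono fun _ hk => not_lt.1 hk)
  exact ha.not_ge <| hLs ⟨m ∘ φ, hm.comp hφ, fun k => (u (φ k), a), hle,
    (hu.comp hφ.tendsto_atTop).prodMk_nhds tendsto_const_nhds⟩

theorem le_add_of_Ls_subset_hypo (hLs : Ls (fun n => hypo (fn n)) ⊆ hypo f)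
    {m : ℕ → ℕ} (hm : StrictMono m) {u v : ℕ → Y} {y₁ y₂ : Y} (hu : Tendsto u atTop (𝓝 y₁))
    (hv : Tendsto v atTop (𝓝 y₂)) {c : ℕ → ℝ} {C : ℝ} (hc : Tendsto c atTop (𝓝 C))
    (h : ∀ᶠ k in atTop, c k ≤ fn (m k) (u k) + fn (m k) (v k)) : C ≤ f y₁ + f y₂ := by
  by_contra! hlt
  have hδ : 0 < (C - (f y₁ + f y₂)) / 3 := by linarith
  obtain ⟨k, hk, hku, hkv, hkc⟩ := (h.and <|
    (eventually_lt_of_Ls_subset_hypo hLs hm hu (lt_add_of_pos_right _ hδ)).and <|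
    (eventually_lt_of_Ls_subset_hypo hLs hm hv (lt_add_of_pos_right _ hδ)).and <|
    hc.eventually (lt_mem_nhds (sub_lt_self C hδ))).exists
  linarith

end Hypo

section Limit

variable {en : ℕ → ℝ × ℝ → ℝ × ℝ → ℝ} {ε : ℕ → ℝ} {e : ℝ × ℝ → ℝ × ℝ → ℝ}

theorem exists_cle_le_add_ePlus_of_splits (hen : ∀ n, IsE (en n))
    (happ : ∀ n, ApproxMCL (en n) (ε n)) (hε : Tendsto ε atTop (𝓝 0)) (he : IsE e)
    (hLs : Ls (fun n => hypo fun u : (ℝ × ℝ) × (ℝ × ℝ) => en n u.1 u.2) ⊆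
      hypo fun u => e u.1 u.2)
    {m : ℕ → ℕ} (hm : StrictMono m) {a c x b : ℕ → ℝ × ℝ} {y : ℕ → ℝ} {p c₀ q : ℝ × ℝ}
    {C τ : ℝ} (ha : Tendsto a atTop (𝓝 p)) (hc : Tendsto c atTop (𝓝 c₀))
    (hb : Tendsto b atTop (𝓝 q)) (hy : Tendsto y atTop (𝓝 C)) (hcτ : c₀.2 < τ) (hτq : τ < q.2)
    (hsplit : ∀ᶠ k in atTop, cle (a k) (c k) ∧ cle (c k) (x k) ∧ x k ≠ c k ∧ cle (x k) (b k) ∧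
      y k ≤ en (m k) (a k) (c k) + en (m k) (x k) (b k)) :
    ∃ N, cle c₀ N ∧ N.2 ≤ τ ∧ C ≤ e p N + ePlus e c₀ q := by
  have herr : Tendsto (fun k => ε (m k) + 1 / ((k : ℝ) + 1)) atTop (𝓝 0) := by
    simpa using (hε.comp hm.tendsto_atTop).add tendsto_one_div_add_atTop_nhds_zero_nat
  have hτ : ∀ᶠ k in atTop, (c k).2 < τ ∧ τ < (b k).2 :=
    (hc.snd_nhds.eventually (gt_mem_nhds hcτ)).and (hb.snd_nhds.eventually (lt_mem_nhds hτq))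
  have hex : ∀ᶠ k in atTop, ∃ NX : (ℝ × ℝ) × (ℝ × ℝ),
      cle (c k) NX.1 ∧ NX.1.2 ≤ τ ∧ cle NX.1 NX.2 ∧ τ ≤ NX.2.2 ∧ cle NX.2 (b k) ∧
      y k - (ε (m k) + 1 / ((k : ℝ) + 1)) ≤ en (m k) (a k) NX.1 + en (m k) NX.2 (b k) := by
    filter_upwards [hsplit, hτ] with k ⟨hac, hcx, hxc, hxb, hyk⟩ ⟨hcτ, hτb⟩
    obtain ⟨N, X, h₁, h₂, h₃, h₄, h₅, h⟩ := (hen (m k)).exists_split_across (happ (m k)) hac hcx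
      hxc hxb hcτ hτb (by positivity : (0 : ℝ) < 1 / ((k : ℝ) + 1))
    exact ⟨(N, X), h₁, h₂, h₃, h₄, h₅, by linarith⟩
  obtain ⟨NX, hNX⟩ := hex.choice
  have hD := isBounded_setOf_cle_cle (isBounded_range_of_tendsto c hc)
    (isBounded_range_of_tendsto b hb)
  obtain ⟨⟨N, X⟩, -, ψ, hψ, hlim⟩ := tendsto_subseq_of_frequently_bounded (hD.prod hD)
    (hNX.mono fun k hk => ⟨⟨k, hk.1, hk.2.2.1.trans hk.2.2.2.2.1⟩, ⟨k, hk.1.trans hk.2.2.1,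
      hk.2.2.2.2.1⟩⟩).frequently
  have hNXψ := hψ.tendsto_atTop.eventually hNX
  have hcψ := hc.comp hψ.tendsto_atTop
  have hcN : cle c₀ N := cle_of_tendsto hcψ hlim.fst_nhds (hNXψ.mono fun _ hk => hk.1)
  have hcX : cle c₀ X :=
    cle_of_tendsto hcψ hlim.snd_nhds (hNXψ.mono fun _ hk => hk.1.trans hk.2.2.1)
  have hNτ : N.2 ≤ τ := le_of_tendsto hlim.fst_nhds.snd_nhds (hNXψ.mono fun _ hk => hk.2.1)
  have hτX : τ ≤ X.2 := ge_of_tendsto hlim.snd_nhds.snd_nhds (hNXψ.mono fun _ hk => hk.2.2.2.1)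
  have hsum : C ≤ e p N + e X q := by
    refine le_add_of_Ls_subset_hypo hLs (hm.comp hψ) ((ha.comp hψ.tendsto_atTop).prodMk_nhds
      hlim.fst_nhds) (hlim.snd_nhds.prodMk_nhds (hb.comp hψ.tendsto_atTop))
      (by simpa using (hy.comp hψ.tendsto_atTop).sub (herr.comp hψ.tendsto_atTop))
      (hNXψ.mono fun _ hk => hk.2.2.2.2.2)
  have hXc : X ≠ c₀ := fun h => (hcτ.trans_le hτX).ne' (congrArg Prod.snd h)
  have hcq : c₀ ≠ q := fun h => (hcτ.trans hτq).ne (congrArg Prod.snd h)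
  exact ⟨N, hcN, hNτ, by linarith [he.le_ePlus hcX hXc hcq]⟩

theorem le_sSup_mclValues_of_mem_Li (hen : ∀ n, IsE (en n))
    (happ : ∀ n, ApproxMCL (en n) (ε n)) (hε : Tendsto ε atTop (𝓝 0)) (he : IsE e)
    (hLs : Ls (fun n => hypo fun u : (ℝ × ℝ) × (ℝ × ℝ) => en n u.1 u.2) ⊆
      hypo fun u => e u.1 u.2)
    {p q : ℝ × ℝ} {r C : ℝ} (hpr : p.2 ≤ r) (hrq : r < q.2)
    (hC : ((p, q), C) ∈ Li fun n => hypo fun u : (ℝ × ℝ) × (ℝ × ℝ) => en n u.1 u.2) :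
    C ≤ sSup (mclValues e p q r) := by
  rcases le_or_gt C 0 with hC0 | hC0
  · exact hC0.trans (he.sSup_mclValues_nonneg p q r)
  obtain ⟨U, hU, hUe⟩ := hC
  set P := fun n => (U n).1.1
  set Q := fun n => (U n).1.2
  set y := fun n => (U n).2 - (ε n + 1 / ((n : ℝ) + 1))
  have hP : Tendsto P atTop (𝓝 p) := hU.fst_nhds.fst_nhds
  have hQ : Tendsto Q atTop (𝓝 q) := hU.fst_nhds.snd_nhds
  have hy : Tendsto y atTop (𝓝 C) := by
    simpa [y] using hU.snd_nhds.sub (hε.add tendsto_one_div_add_atTop_nhds_zero_nat)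
  -- `Pₙ.2` may exceed `r`, so the split is made at time `max r Pₙ.2`
  have ht : Tendsto (fun n => max r (P n).2) atTop (𝓝 r) := by
    simpa [max_eq_left hpr] using (tendsto_const_nhds (x := r)).max hP.snd_nhds
  have hex : ∀ᶠ n in atTop, ∃ cx : (ℝ × ℝ) × (ℝ × ℝ), cle (P n) cx.1 ∧ cx.1.2 = max r (P n).2 ∧
      cle cx.1 cx.2 ∧ cx.2 ≠ cx.1 ∧ cle cx.2 (Q n) ∧ y n ≤ en n (P n) cx.1 + en n cx.2 (Q n) := by
    filter_upwards [hUe, hU.snd_nhds.eventually (lt_mem_nhds hC0),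
      (hQ.snd_nhds.sub ht).eventually (lt_mem_nhds (sub_pos.2 hrq))] with n hn hn0 htQ
    have hn' : (U n).2 ≤ en n (P n) (Q n) := hn
    obtain ⟨z, x, h₁, h₂, h₃, h₄, h⟩ := (hen n).exists_split (happ n)
      ((hen n).cle_of_pos (hn0.trans_le hn')) (le_max_right _ _) (sub_pos.1 htQ)
      (by positivity : (0 : ℝ) < 1 / ((n : ℝ) + 1))
    exact ⟨((z, max r (P n).2), x), h₁, rfl, h₂, h₃, h₄, show (U n).2 - _ ≤ _ by linarith⟩
  obtain ⟨cx, hcx⟩ := hex.choice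
  obtain ⟨⟨z₀, r₀⟩, -, φ, hφ, hc⟩ := tendsto_subseq_of_frequently_bounded (x := fun n => (cx n).1)
    (isBounded_setOf_cle_cle (isBounded_range_of_tendsto P hP) (isBounded_range_of_tendsto Q hQ))
    (hcx.mono fun n hn => ⟨n, hn.1, hn.2.2.1.trans hn.2.2.2.2.1⟩).frequently
  have hcxφ := hφ.tendsto_atTop.eventually hcx
  obtain rfl : r = r₀ := tendsto_nhds_unique ((ht.comp hφ.tendsto_atTop).congr'
    (hcxφ.mono fun _ hk => hk.2.1.symm)) hc.snd_nhds
  have hpc : cle p (z₀, r) :=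
    cle_of_tendsto (hP.comp hφ.tendsto_atTop) hc (hcxφ.mono fun _ hk => hk.1)
  have hcq : cle (z₀, r) q :=
    cle_of_tendsto hc (hQ.comp hφ.tendsto_atTop) (hcxφ.mono fun _ hk => hk.2.2.1.trans hk.2.2.2.2.1)
  have hcq' : ((z₀, r) : ℝ × ℝ) ≠ q := fun h => hrq.ne (congrArg Prod.snd h)
  have hmain : C - ePlus e (z₀, r) q ≤ e p (z₀, r) := by
    refine le_of_upperSemicontinuousAt_of_cle (he.upperSemicontinuous_right p _) hrq ?_
    intro τ hτ
    obtain ⟨N, hcN, hNτ, hN⟩ := exists_cle_le_add_ePlus_of_splits hen happ hε he hLs hφ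
      (hP.comp hφ.tendsto_atTop) hc (hQ.comp hφ.tendsto_atTop) (hy.comp hφ.tendsto_atTop)
      hτ.1 hτ.2 (hcxφ.mono fun _ hk => ⟨hk.1, hk.2.2⟩)
    exact ⟨N, hcN, hNτ, by linarith⟩
  calc C ≤ e p (z₀, r) + ePlus e (z₀, r) q := by linarith
    _ ≤ sSup (mclValues e p q r) := le_csSup (he.bddAbove_mclValues p q r) ⟨z₀, hpc, hcq, hcq', rfl⟩

end Limit

/-- A sequence in `𝓔` satisfying the approximate metric composition law (with errors
`ε_n → 0`) cannot hypo-converge to a metric failing the exact metric composition law. -/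
theorem stmt19 (en : ℕ → ℝ × ℝ → ℝ × ℝ → ℝ) (hen : ∀ n, IsE (en n))
    (ε : ℕ → ℝ) (hε : Tendsto ε atTop (nhds 0))
    (happ : ∀ (n : ℕ) (p q : ℝ × ℝ) (r : ℝ), cle p q → p.2 ≤ r → r < q.2 →
      sSup {v : ℝ | ∃ z : ℝ, cle p (z, r) ∧ cle (z, r) q ∧ (z, r) ≠ q ∧
          v = en n p (z, r) + ePlus (en n) (z, r) q} ≤ en n p q ∧
      en n p q ≤ sSup {v : ℝ | ∃ z : ℝ, cle p (z, r) ∧ cle (z, r) q ∧ (z, r) ≠ q ∧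
          v = en n p (z, r) + ePlus (en n) (z, r) q} + ε n)
    (e : ℝ × ℝ → ℝ × ℝ → ℝ) (he : IsE e) (hnot : ¬ MCL e) :
    ¬ HypoConv (fun n => fun u : (ℝ × ℝ) × (ℝ × ℝ) => en n u.1 u.2)
      (fun u : (ℝ × ℝ) × (ℝ × ℝ) => e u.1 u.2) := by
  rintro ⟨hLi, hLs⟩
  have happ' : ∀ n, ApproxMCL (en n) (ε n) := fun n p q r hpq hpr hrq =>
    (happ n p q r hpq hpr hrq).2
  obtain ⟨p, q, r, -, hpr, hrq, hne⟩ :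
      ∃ p q r, cle p q ∧ p.2 ≤ r ∧ r < q.2 ∧ e p q ≠ sSup (mclValues e p q r) := by
    simpa [MCL, mclValues] using hnot
  have hmem : ((p, q), e p q) ∈ Li fun n => hypo fun u : (ℝ × ℝ) × (ℝ × ℝ) => en n u.1 u.2 :=
    hLi.symm.subset (show ((p, q), e p q) ∈ hypo _ from le_refl (e p q))
  exact hne <| le_antisymm
    (le_sSup_mclValues_of_mem_Li hen happ' hε he hLs.subset hpr hrq hmem)
    (he.sSup_mclValues_le p q r)
end
end
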